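/- Let A be a commutative ring that is an integral domain and an algebra over a commutative ring k, let f, g ∈ A with f ≠ 0, and let (D_i)_{i ∈ I} be a family of k-linear derivations of A such that f·D_i(g) = g·D_i(f) for every i ∈ I. Then every derivation T belonging to the Lie subalgebra of derivations of A generated by the family (D_i)_{i ∈ I} (i.e., to the smallest subset containing all D_i and closed under k-linear combinations and iterated commutator brackets) also satisfies f·T(g) = g·T(f). -/

import Mathlib

/-!
Derivations `D` with `f * D g = g * D f` form a Lie subalgebra, which therefore contains the
Lie span of the `D i`. For the bracket, applying `S` to the Wronskian identity of `R` and `R` to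
that of `S` and subtracting leaves `2 (R g * S f - S g * R f)`, which vanishes after cancelling
`f` from `f * (R g * S f - S g * R f) = S f * (f * R g - g * R f) - R f * (f * S g - g * S f)`.
-/

namespace Derivation

variable {k A : Type*} [CommRing k] [CommRing A] [Algebra k A] {f g : A}
  {R S : Derivation k A A}

theorem mul_apply_mul_eq_of_wronskian (hf : IsLeftRegular f) (hR : f * R g = g * R f)
    (hS : f * S g = g * S f) : R g * S f = S g * R f :=
  hf <| by linear_combination S f * hR - R f * hS

theorem wronskian_commutator (hf : IsLeftRegular f) (hR : f * R g = g * R f)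
    (hS : f * S g = g * S f) : f * ⁅R, S⁆ g = g * ⁅R, S⁆ f := by
  have hSR := congrArg S hR
  have hRS := congrArg R hS
  simp only [leibniz, smul_eq_mul] at hSR hRS
  rw [commutator_apply, commutator_apply]
  linear_combination hRS - hSR + 2 * mul_apply_mul_eq_of_wronskian hf hR hS

variable (k f g) in
def wronskianLieSubalgebra (hf : IsLeftRegular f) : LieSubalgebra k (Derivation k A A) where
  carrier := {D | f * D g = g * D f}
  add_mem' {R S} hR hS := by
    simp only [Set.mem_ofPred_eq, add_apply] at *
    linear_combination hR + hS
  zero_mem' := by simp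
  smul_mem' c D hD := by
    simp only [Set.mem_ofPred_eq, smul_apply, mul_smul_comm] at *
    rw [hD]
  lie_mem' := wronskian_commutator hf

end Derivation

/-- Let `A` be a commutative integral domain that is an algebra over a commutative
ring `k`, let `f g : A` with `f ≠ 0`, and let `(D i)_{i ∈ I}` be a family of
`k`-linear derivations of `A` such that `f·(D i)(g) = g·(D i)(f)` for every `i`.
Then every derivation `T` in the Lie subalgebra generated by the family `(D i)`
also satisfies `f·T(g) = g·T(f)`. -/
theorem wronskian_lieSpan (k A : Type*) [CommRing k] [CommRing A] [IsDomain A]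
    [Algebra k A] (f g : A) (hf : f ≠ 0) {I : Type*} (D : I → Derivation k A A)
    (hD : ∀ i, f * D i g = g * D i f) (T : Derivation k A A)
    (hT : T ∈ LieSubalgebra.lieSpan k (Derivation k A A) (Set.range D)) :
    f * T g = g * T f := by
  have hrange :
      Set.range D ⊆ Derivation.wronskianLieSubalgebra k f g (IsRegular.of_ne_zero hf).left := by
    rintro _ ⟨i, rfl⟩
    exact hD i
  exact LieSubalgebra.lieSpan_le.mpr hrange hT
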